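/- arXiv:1209.4056 — 3 statements merged into one kernel-verified Lean document; each statement's English description precedes it below -/
import Mathlib

section
/- Main structural lemma (lower bound on violated-edge mass): if f : {0,1}^d → δℤ is ε-far from Lipschitz with respect to a product Bernoulli distribution Π on {0,1}^d (meaning every Lipschitz g : {0,1}^d → ℝ satisfies Pr_{x∼Π}[f(x) ≠ g(x)] ≥ ε), then Σ over violated edges {x,y} of (p_x + p_y)/d ≥ δ(ε − d²δ)/(d · ImD(f)). -/
open scoped Classical

/-- The probability mass of a vertex `x ∈ {0,1}^d` under the product Bernoulli
distribution `Ber(p 1) × ⋯ × Ber(p d)`. -/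
def vmass {d : ℕ} (p : Fin d → ℝ) (x : Fin d → Bool) : ℝ :=
  ∏ i, if x i then p i else 1 - p i

/-- Image diameter of a function on the hypercube: `max f - min f`. -/
noncomputable def ImD {d : ℕ} (f : (Fin d → Bool) → ℝ) : ℝ :=
  Finset.univ.sup' Finset.univ_nonempty f - Finset.univ.inf' Finset.univ_nonempty f

/-!
Repair `f` one dimension at a time. Stage `i` clamps every `i`-edge gap to `[-1, 1]`, moving
the two endpoints in the ratio `1 - pᵢ : pᵢ` so that the `Π`-mean on the edge is kept; its
`L¹(Π)` cost is `2pᵢ(1 - pᵢ) ≤ 1/2` times the violation score `Vᵢ = E_Π[(|gapᵢ| - 1)₊]`. Since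
the correction is a monotone `1`-Lipschitz function of the gap, on every edge of another
dimension `j` it pulls the two `j`-gaps toward each other with their `Π`-mean fixed, so by
convexity of `(|s| - 1)₊` it increases neither `Vⱼ` nor a gap already in `[-1, 1]`. After all `d`
stages `g` is Lipschitz and `E_Π|g - f| ≤ ∑ Vᵢ / 2 ≤ ImD(f) · M / 2`, where `M` is the violated
edge mass. On `{|g - f| < δ/2}` the `δℤ`-valued `f` is Lipschitz, so it has a Lipschitz
extension from there, and Markov's inequality gives `ε ≤ (2/δ) E_Π|g - f|`, i.e.
`δ ε ≤ ImD(f) · M`.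
-/

open Finset Function Set

namespace LipschitzRepair

noncomputable def excess (s : ℝ) : ℝ := s - max (-1) (min 1 s)

noncomputable def overshoot (s : ℝ) : ℝ := max (|s| - 1) 0

lemma overshoot_nonneg (s : ℝ) : 0 ≤ overshoot s := le_max_right _ _

lemma overshoot_eq_zero {s : ℝ} (h : |s| ≤ 1) : overshoot s = 0 := max_eq_right (by linarith)

lemma overshoot_le {s c : ℝ} (hs : |s| ≤ c) (hc : 0 ≤ c) : overshoot s ≤ c :=
  max_le (by linarith) hc

lemma abs_excess (s : ℝ) : |excess s| = overshoot s := by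
  simp only [excess, overshoot, abs_eq_max_neg, max_def, min_def]
  split_ifs <;> linarith

lemma abs_sub_excess_le_one (s : ℝ) : |s - excess s| ≤ 1 := by
  rw [excess, sub_sub_cancel]
  exact abs_le.2 ⟨le_max_left _ _, max_le (by norm_num) (min_le_left _ _)⟩

lemma excess_le_excess_of_le {a b : ℝ} (h : a ≤ b) :
    excess a ≤ excess b ∧ excess b - excess a ≤ b - a := by
  simp only [excess, max_def, min_def]
  split_ifs <;> constructor <;> linarith

lemma exists_excess_sub_excess_eq_mul (a b : ℝ) :
    ∃ t ∈ Icc (0 : ℝ) 1, excess b - excess a = t * (b - a) := by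
  wlog hab : a ≤ b generalizing a b
  · obtain ⟨t, ht, h⟩ := this b a (le_of_not_ge hab)
    exact ⟨t, ht, by linarith⟩
  obtain ⟨h0, h1⟩ := excess_le_excess_of_le hab
  rcases hab.eq_or_lt with rfl | hlt
  · exact ⟨0, left_mem_Icc.2 zero_le_one, by simp⟩
  · have hpos : 0 < b - a := sub_pos.2 hlt
    exact ⟨(excess b - excess a) / (b - a), ⟨by positivity, div_le_one_of_le₀ h1 hpos.le⟩,
      by field_simp⟩

lemma convexOn_overshoot : ConvexOn ℝ univ overshoot := by
  have hnorm : ConvexOn ℝ univ fun s : ℝ => ‖s‖ := convexOn_norm convex_univ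
  have habs : ConvexOn ℝ univ fun s : ℝ => |s| := by simpa only [Real.norm_eq_abs] using hnorm
  exact (habs.sub (concaveOn_const 1 convex_univ)).sup (convexOn_const 0 convex_univ)

lemma _root_.ConvexOn.contract_pair_le {φ : ℝ → ℝ} (hφ : ConvexOn ℝ univ φ) {q t : ℝ}
    (hq : q ∈ Icc (0 : ℝ) 1) (ht : t ∈ Icc (0 : ℝ) 1) (u v : ℝ) :
    (1 - q) * φ (u + q * (t * (v - u))) + q * φ (v - (1 - q) * (t * (v - u))) ≤
      (1 - q) * φ u + q * φ v := by
  obtain ⟨hq0, hq1⟩ := hq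
  obtain ⟨ht0, ht1⟩ := ht
  have along : ∀ a, 0 ≤ a → a ≤ 1 → ∀ x y,
      φ (x + a * (y - x)) ≤ (1 - a) * φ x + a * φ y := by
    intro a ha0 ha1 x y
    calc φ (x + a * (y - x)) = φ ((1 - a) • x + a • y) := by
          rw [smul_eq_mul, smul_eq_mul]; ring_nf
      _ ≤ (1 - a) • φ x + a • φ y :=
        hφ.2 (mem_univ x) (mem_univ y) (sub_nonneg.2 ha1) ha0 (by ring)
  have hu := along (q * t) (by positivity) (by nlinarith) u v
  have hv := along ((1 - q) * t) (by nlinarith) (by nlinarith) v u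
  rw [← mul_assoc, ← mul_assoc,
    show v - (1 - q) * t * (v - u) = v + (1 - q) * t * (u - v) by ring]
  nlinarith [mul_le_mul_of_nonneg_left hu (sub_nonneg.2 hq1), mul_le_mul_of_nonneg_left hv hq0]

lemma abs_add_mul_sub_le_one {u v a : ℝ} (hu : |u| ≤ 1) (hv : |v| ≤ 1)
    (ha : a ∈ Icc (0 : ℝ) 1) : |u + a * (v - u)| ≤ 1 := by
  simpa [abs_le] using (convex_Icc (-1 : ℝ) 1).add_smul_sub_mem (abs_le.1 hu) (abs_le.1 hv) ha

lemma abs_sub_le_of_lt_add_of_int_mul {δ a b m : ℝ} (hδ : 0 < δ) (ha : ∃ n : ℤ, a = n * δ)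
    (hb : ∃ n : ℤ, b = n * δ) (hm : ∃ n : ℤ, m = n * δ) (h : |a - b| < m + δ) :
    |a - b| ≤ m := by
  obtain ⟨na, rfl⟩ := ha
  obtain ⟨nb, rfl⟩ := hb
  obtain ⟨nm, rfl⟩ := hm
  have hab : (na : ℝ) * δ - nb * δ = ((na - nb : ℤ) : ℝ) * δ := by push_cast; ring
  rw [hab, abs_mul, abs_of_pos hδ] at h ⊢
  have hlt : |((na - nb : ℤ) : ℝ)| < nm + 1 := by nlinarith
  have hle : |na - nb| ≤ nm := Int.lt_add_one_iff.1 (by exact_mod_cast hlt)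
  exact mul_le_mul_of_nonneg_right (by exact_mod_cast hle) hδ.le

lemma mul_sum_filter_le_sum_mul {α : Type*} (s : Finset α) {w F : α → ℝ}
    (hw : ∀ x ∈ s, 0 ≤ w x) (hF : ∀ x ∈ s, 0 ≤ F x) (c : ℝ) :
    c * ∑ x ∈ s with c ≤ F x, w x ≤ ∑ x ∈ s, w x * F x := by
  rw [mul_sum]
  calc ∑ x ∈ s with c ≤ F x, c * w x ≤ ∑ x ∈ s with c ≤ F x, w x * F x :=
        sum_le_sum fun x hx => by
          rw [mem_filter] at hx
          nlinarith [hw x hx.1]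
    _ ≤ ∑ x ∈ s, w x * F x :=
        sum_le_sum_of_subset_of_nonneg (filter_subset _ _) fun x hx _ =>
          mul_nonneg (hw x hx) (hF x hx)

section Cube

variable {ι : Type*} [DecidableEq ι]

noncomputable def edgeGap (i : ι) (h : (ι → Bool) → ℝ) (x : ι → Bool) : ℝ :=
  h (update x i true) - h (update x i false)

@[simp]
lemma edgeGap_update_self (i : ι) (h : (ι → Bool) → ℝ) (x : ι → Bool) (b : Bool) :
    edgeGap i h (update x i b) = edgeGap i h x := by
  simp only [edgeGap, update_idem]

lemma edgeGap_comm (i j : ι) (h : (ι → Bool) → ℝ) :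
    edgeGap i (edgeGap j h) = edgeGap j (edgeGap i h) := by
  funext x
  rcases eq_or_ne i j with rfl | hij
  · rfl
  · simp only [edgeGap, update_comm hij]
    ring

lemma abs_sub_update_le_one {g : (ι → Bool) → ℝ} {i : ι} (hg : ∀ x, |edgeGap i g x| ≤ 1)
    (x : ι → Bool) (b : Bool) : |g x - g (update x i b)| ≤ 1 := by
  have hx : ∀ c c' : Bool, |g (update x i c) - g (update x i c')| ≤ 1 := by
    have := hg x
    rw [edgeGap] at this
    intro c c'
    cases c <;> cases c' <;> first | simp | exact this | rwa [abs_sub_comm]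
  simpa using hx (x i) b

variable [Fintype ι]

lemma hammingDist_update_add_one {x y : ι → Bool} {i : ι} (hi : x i ≠ y i) :
    hammingDist (update x i (y i)) y + 1 = hammingDist x y := by
  have hfil : ({k | update x i (y i) k ≠ y k} : Finset ι) =
      ({k | x k ≠ y k} : Finset ι).erase i := by
    ext k
    rcases eq_or_ne k i with rfl | hki <;> simp [*]
  have hmem : i ∈ ({k | x k ≠ y k} : Finset ι) := by simp [hi]
  rw [hammingDist, hammingDist, hfil, card_erase_add_one hmem]

lemma abs_sub_le_hammingDist_of_abs_edgeGap_le_one {g : (ι → Bool) → ℝ}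
    (hg : ∀ i x, |edgeGap i g x| ≤ 1) (x y : ι → Bool) :
    |g x - g y| ≤ hammingDist x y := by
  induction hxy : hammingDist x y generalizing x with
  | zero => simp [hammingDist_eq_zero.1 hxy]
  | succ n ih =>
    obtain ⟨i, hi⟩ : ∃ i, x i ≠ y i := by
      by_contra! h
      simp [funext h] at hxy
    have hn := ih (update x i (y i)) (by have := hammingDist_update_add_one hi; omega)
    calc |g x - g y| ≤ |g x - g (update x i (y i))| + |g (update x i (y i)) - g y| :=
          abs_sub_le _ _ _
      _ ≤ 1 + n := add_le_add (abs_sub_update_le_one (hg i) x _) hn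
      _ = (n + 1 : ℕ) := by push_cast; ring

lemma sum_eq_sum_filter_add_update (i : ι) (G : (ι → Bool) → ℝ) :
    ∑ x, G x = ∑ x with x i = false, (G x + G (update x i true)) := by
  rw [sum_add_distrib, ← sum_filter_add_sum_filter_not univ (fun x => x i = false)]
  congr 1
  refine sum_nbij' (update · i false) (update · i true) ?_ ?_ ?_ ?_ fun x hx => ?_ <;>
    simp_all [update_eq_self_iff]
  rw [update_eq_self_iff.2 hx.symm]

end Cube

section Extension

variable {ι : Type*} [Fintype ι]

lemma exists_lipschitz_extension {f : (ι → Bool) → ℝ} {s : Set (ι → Bool)}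
    (hf : ∀ x ∈ s, ∀ y ∈ s, |f x - f y| ≤ hammingDist x y) :
    ∃ g : (ι → Bool) → ℝ,
      (∀ x y, |g x - g y| ≤ hammingDist x y) ∧ ∀ x ∈ s, g x = f x := by
  have hlip : LipschitzOnWith 1 (f ∘ Hamming.ofHamming) (Hamming.ofHamming ⁻¹' s) :=
    lipschitzOnWith_iff_dist_le_mul.2 fun x hx y hy => by
      simpa [Real.dist_eq, Hamming.dist_eq_hammingDist] using
        hf (Hamming.ofHamming x) hx (Hamming.ofHamming y) hy
  obtain ⟨G, hG, hGf⟩ := hlip.extend_real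
  refine ⟨G ∘ Hamming.toHamming, fun x y => ?_,
    fun x hx => (hGf (x := Hamming.toHamming x) hx).symm⟩
  simpa [Real.dist_eq, Hamming.dist_eq_hammingDist] using
    hG.dist_le_mul (Hamming.toHamming x) (Hamming.toHamming y)

lemma exists_lipschitz_eq_of_abs_sub_lt_half {δ : ℝ} (hδ : 0 < δ)
    (hδint : ∃ n : ℤ, (n : ℝ) * δ = 1) {f g : (ι → Bool) → ℝ}
    (hf : ∀ x, ∃ n : ℤ, f x = n * δ) (hg : ∀ x y, |g x - g y| ≤ hammingDist x y) :
    ∃ G : (ι → Bool) → ℝ, (∀ x y, |G x - G y| ≤ hammingDist x y) ∧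
      ∀ x, |g x - f x| < δ / 2 → G x = f x := by
  obtain ⟨N, hN⟩ := hδint
  refine exists_lipschitz_extension fun x hx y hy =>
    abs_sub_le_of_lt_add_of_int_mul hδ (hf x) (hf y)
      ⟨hammingDist x y * N, by push_cast; rw [mul_assoc, hN, mul_one]⟩ ?_
  have hx' : |g x - f x| < δ / 2 := hx
  have hy' : |g y - f y| < δ / 2 := hy
  rw [abs_sub_comm] at hx'
  linarith [abs_sub_le (f x) (g x) (f y), abs_sub_le (g x) (g y) (f y), hg x y]

end Extension

section Repair

variable {d : ℕ} {p : Fin d → ℝ}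

lemma vmass_nonneg (hp : ∀ i, p i ∈ Icc (0 : ℝ) 1) (x : Fin d → Bool) : 0 ≤ vmass p x :=
  prod_nonneg fun i _ => by split <;> linarith [(hp i).1, (hp i).2]

lemma vmass_update (p : Fin d → ℝ) (x : Fin d → Bool) (i : Fin d) (b : Bool) :
    vmass p (update x i b) =
      (if b then p i else 1 - p i) * ∏ k ∈ univ.erase i, if x k then p k else 1 - p k := by
  rw [vmass, ← mul_prod_erase univ _ (mem_univ i), update_self]
  congr 1
  exact prod_congr rfl fun k hk => by rw [update_of_ne (ne_of_mem_erase hk)]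

lemma sum_vmass_mul_le_sum_vmass_mul (hp : ∀ i, p i ∈ Icc (0 : ℝ) 1) (i : Fin d)
    {A B : (Fin d → Bool) → ℝ}
    (hAB : ∀ x, (1 - p i) * A (update x i false) + p i * A (update x i true) ≤
      (1 - p i) * B (update x i false) + p i * B (update x i true)) :
    ∑ x, vmass p x * A x ≤ ∑ x, vmass p x * B x := by
  rw [sum_eq_sum_filter_add_update i, sum_eq_sum_filter_add_update i]
  refine sum_le_sum fun x hx => ?_
  have hx : update x i false = x := update_eq_self_iff.2 (mem_filter.1 hx).2.symm
  rw [← hx]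
  have hν : 0 ≤ ∏ k ∈ univ.erase i, if x k then p k else 1 - p k :=
    prod_nonneg fun k _ => by split <;> linarith [(hp k).1, (hp k).2]
  simp only [update_idem, vmass_update, if_true, Bool.false_eq_true, if_false]
  nlinarith [mul_le_mul_of_nonneg_left (hAB x) hν]

/-- Clamps every dimension-`i` edge gap of `h` to `[-1, 1]`, splitting the correction between
the two endpoints in the ratio `1 - p i : p i` so that the `Π`-mean of `h` on each edge is
unchanged. -/
noncomputable def repair (p : Fin d → ℝ) (i : Fin d) (h : (Fin d → Bool) → ℝ)
    (x : Fin d → Bool) : ℝ :=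
  h x - (if x i then 1 - p i else -p i) * excess (edgeGap i h x)

noncomputable def violationScore (p : Fin d → ℝ) (i : Fin d) (h : (Fin d → Bool) → ℝ) :
    ℝ :=
  ∑ x, vmass p x * overshoot (edgeGap i h x)

lemma abs_edgeGap_repair_self_le_one (p : Fin d → ℝ) (i : Fin d) (h : (Fin d → Bool) → ℝ)
    (x : Fin d → Bool) : |edgeGap i (repair p i h) x| ≤ 1 := by
  have hgap : edgeGap i (repair p i h) x = edgeGap i h x - excess (edgeGap i h x) := by
    simp only [edgeGap, repair, update_self, update_idem, if_true, Bool.false_eq_true, if_false]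
    ring
  rw [hgap]
  exact abs_sub_excess_le_one _

lemma edgeGap_repair_update_of_ne {i j : Fin d} (hji : j ≠ i) (h : (Fin d → Bool) → ℝ)
    (x : Fin d → Bool) (b : Bool) :
    edgeGap j (repair p i h) (update x i b) = edgeGap j h (update x i b) -
      (if b then 1 - p i else -p i) * edgeGap j (fun y => excess (edgeGap i h y)) x := by
  have hcomm : ∀ c, edgeGap i h (update (update x i b) j c) = edgeGap i h (update x j c) := by
    intro c
    rw [update_comm hji.symm, edgeGap_update_self]
  simp only [edgeGap, repair, update_of_ne hji.symm, update_self] at hcomm ⊢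
  rw [hcomm, hcomm]
  ring

/-- For `j ≠ i`, repairing dimension `i` moves the two `j`-gaps `u, v` above an `i`-edge toward
each other, keeping their `Π`-mean: `excess` is monotone and `1`-Lipschitz, and the difference of
the two `i`-gaps it is applied to equals `v - u`. -/
lemma exists_edgeGap_repair_of_ne {i j : Fin d} (hji : j ≠ i) (h : (Fin d → Bool) → ℝ)
    (x : Fin d → Bool) : ∃ t ∈ Icc (0 : ℝ) 1,
      edgeGap j (repair p i h) (update x i false) = edgeGap j h (update x i false) +
        p i * (t * (edgeGap j h (update x i true) - edgeGap j h (update x i false))) ∧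
      edgeGap j (repair p i h) (update x i true) = edgeGap j h (update x i true) -
        (1 - p i) * (t * (edgeGap j h (update x i true) - edgeGap j h (update x i false))) := by
  obtain ⟨t, ht, hexc⟩ := exists_excess_sub_excess_eq_mul (edgeGap i h (update x j false))
    (edgeGap i h (update x j true))
  have hmixed : edgeGap j (fun y => excess (edgeGap i h y)) x =
      t * (edgeGap j h (update x i true) - edgeGap j h (update x i false)) := by
    rw [edgeGap, hexc, ← edgeGap, ← edgeGap, edgeGap_comm]
  refine ⟨t, ht, ?_, ?_⟩ <;> rw [edgeGap_repair_update_of_ne hji, hmixed] <;> simp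

lemma violationScore_repair_le (hp : ∀ i, p i ∈ Icc (0 : ℝ) 1) {i j : Fin d} (hji : j ≠ i)
    (h : (Fin d → Bool) → ℝ) :
    violationScore p j (repair p i h) ≤ violationScore p j h := by
  refine sum_vmass_mul_le_sum_vmass_mul hp i fun x => ?_
  obtain ⟨t, ht, hfalse, htrue⟩ := exists_edgeGap_repair_of_ne (p := p) hji h x
  rw [hfalse, htrue]
  exact convexOn_overshoot.contract_pair_le (hp i) ht _ _

lemma abs_edgeGap_repair_le_one_of_ne (hp : ∀ i, p i ∈ Icc (0 : ℝ) 1) {i j : Fin d}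
    (hji : j ≠ i) {h : (Fin d → Bool) → ℝ} (hh : ∀ x, |edgeGap j h x| ≤ 1) (x : Fin d → Bool) :
    |edgeGap j (repair p i h) x| ≤ 1 := by
  obtain ⟨t, ⟨ht0, ht1⟩, hfalse, htrue⟩ := exists_edgeGap_repair_of_ne (p := p) hji h x
  obtain ⟨hp0, hp1⟩ := hp i
  rw [← update_eq_self i x]
  cases x i
  · rw [hfalse, ← mul_assoc]
    exact abs_add_mul_sub_le_one (hh _) (hh _) ⟨by positivity, by nlinarith⟩
  · rw [htrue, show ∀ a b c : ℝ, b - a * (t * (b - c)) = b + a * t * (c - b) by intros; ring]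
    exact abs_add_mul_sub_le_one (hh _) (hh _) ⟨by nlinarith, by nlinarith⟩

/-- The cost of one repair stage is `2 p (1 - p) ≤ 1 / 2` times the violation score. -/
lemma sum_vmass_mul_abs_repair_sub_le (hp : ∀ i, p i ∈ Icc (0 : ℝ) 1) (i : Fin d)
    (h : (Fin d → Bool) → ℝ) :
    ∑ x, vmass p x * |repair p i h x - h x| ≤ violationScore p i h / 2 := by
  rw [violationScore, sum_div]
  simp_rw [mul_div_assoc]
  refine sum_vmass_mul_le_sum_vmass_mul hp i fun x => ?_
  obtain ⟨hp0, hp1⟩ := hp i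
  have hφ := overshoot_nonneg (edgeGap i h x)
  simp only [repair, sub_sub_cancel_left, abs_neg, abs_mul, abs_excess, update_self,
    edgeGap_update_self, if_true, Bool.false_eq_true, if_false, abs_of_nonneg hp0,
    abs_of_nonneg (sub_nonneg.2 hp1)]
  nlinarith [mul_nonneg hφ (sq_nonneg (2 * p i - 1))]

noncomputable def repairAlong (p : Fin d → ℝ) (l : List (Fin d))
    (f : (Fin d → Bool) → ℝ) : (Fin d → Bool) → ℝ :=
  l.foldr (repair p) f

lemma violationScore_repairAlong_le (hp : ∀ i, p i ∈ Icc (0 : ℝ) 1) {l : List (Fin d)}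
    {j : Fin d} (hj : j ∉ l) (f : (Fin d → Bool) → ℝ) :
    violationScore p j (repairAlong p l f) ≤ violationScore p j f := by
  induction l with
  | nil => rfl
  | cons i l ih =>
    rw [List.mem_cons, not_or] at hj
    exact (violationScore_repair_le hp hj.1 _).trans (ih hj.2)

lemma abs_edgeGap_repairAlong_le_one (hp : ∀ i, p i ∈ Icc (0 : ℝ) 1) {l : List (Fin d)}
    {j : Fin d} (hj : j ∈ l) (f : (Fin d → Bool) → ℝ) (x : Fin d → Bool) :
    |edgeGap j (repairAlong p l f) x| ≤ 1 := by
  induction l generalizing x with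
  | nil => simp at hj
  | cons i l ih =>
    rcases eq_or_ne j i with rfl | hji
    · exact abs_edgeGap_repair_self_le_one p j _ x
    · exact abs_edgeGap_repair_le_one_of_ne hp hji (ih ((List.mem_cons.1 hj).resolve_left hji)) x

lemma sum_vmass_mul_abs_repairAlong_sub_le (hp : ∀ i, p i ∈ Icc (0 : ℝ) 1) {l : List (Fin d)}
    (hl : l.Nodup) (f : (Fin d → Bool) → ℝ) :
    ∑ x, vmass p x * |repairAlong p l f x - f x| ≤ (l.map (violationScore p · f)).sum / 2 := by
  induction l with
  | nil => simp [repairAlong]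
  | cons i l ih =>
    rw [List.nodup_cons] at hl
    set g := repairAlong p l f
    have hstage := sum_vmass_mul_abs_repair_sub_le hp i g
    have hscore := violationScore_repairAlong_le hp hl.1 f
    calc ∑ x, vmass p x * |repair p i g x - f x|
        ≤ ∑ x, (vmass p x * |repair p i g x - g x| + vmass p x * |g x - f x|) :=
          sum_le_sum fun x _ => by
            rw [← mul_add]
            exact mul_le_mul_of_nonneg_left (abs_sub_le _ _ _) (vmass_nonneg hp x)
      _ ≤ _ := by
          rw [sum_add_distrib, List.map_cons, List.sum_cons]
          linarith [ih hl.2]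

lemma abs_sub_le_ImD (f : (Fin d → Bool) → ℝ) (x y : Fin d → Bool) :
    |f x - f y| ≤ ImD f := by
  rw [ImD, abs_le]
  constructor <;> linarith [le_sup' f (mem_univ x), le_sup' f (mem_univ y),
    inf'_le f (mem_univ x), inf'_le f (mem_univ y)]

lemma violationScore_le_ImD_mul (hp : ∀ i, p i ∈ Icc (0 : ℝ) 1) (f : (Fin d → Bool) → ℝ)
    (i : Fin d) :
    violationScore p i f ≤ ImD f * ∑ x with x i = false ∧ 1 < |f x - f (update x i true)|,
      (vmass p x + vmass p (update x i true)) := by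
  have hI : 0 ≤ ImD f := (abs_nonneg _).trans (abs_sub_le_ImD f default default)
  rw [violationScore, sum_eq_sum_filter_add_update i,
    ← sum_filter_add_sum_filter_not _ fun x => 1 < |f x - f (update x i true)|, filter_filter,
    mul_sum, sum_eq_zero (s := filter (fun x => ¬_) _), add_zero]
  · refine sum_le_sum fun x _ => ?_
    have hφ : overshoot (edgeGap i f x) ≤ ImD f := overshoot_le (abs_sub_le_ImD f _ _) hI
    rw [edgeGap_update_self]
    nlinarith [vmass_nonneg hp x, vmass_nonneg hp (update x i true)]
  · intro x hx
    rw [mem_filter, mem_filter] at hx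
    have hgap : |edgeGap i f x| ≤ 1 := by
      have hx0 : update x i false = x := update_eq_self_iff.2 hx.1.2.symm
      rw [edgeGap, hx0, abs_sub_comm]
      exact not_lt.1 hx.2
    simp [overshoot_eq_zero hgap]

noncomputable def violatedEdgeMass (p : Fin d → ℝ) (f : (Fin d → Bool) → ℝ) : ℝ :=
  ∑ i : Fin d, ∑ x with x i = false ∧ 1 < |f x - f (update x i true)|,
    (vmass p x + vmass p (update x i true))

lemma mul_le_ImD_mul_violatedEdgeMass {δ ε : ℝ} (hδ : 0 < δ)
    (hδint : ∃ n : ℤ, (n : ℝ) * δ = 1) (hp : ∀ i, p i ∈ Icc (0 : ℝ) 1)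
    {f : (Fin d → Bool) → ℝ} (hf : ∀ x, ∃ n : ℤ, f x = n * δ)
    (hfar : ∀ g : (Fin d → Bool) → ℝ, (∀ x y, |g x - g y| ≤ hammingDist x y) →
      ε ≤ ∑ x with f x ≠ g x, vmass p x) :
    δ * ε ≤ ImD f * violatedEdgeMass p f := by
  set g := repairAlong p (List.finRange d) f
  have hg : ∀ x y, |g x - g y| ≤ hammingDist x y :=
    abs_sub_le_hammingDist_of_abs_edgeGap_le_one fun j =>
      abs_edgeGap_repairAlong_le_one hp (List.mem_finRange j) f
  obtain ⟨G, hG, hGf⟩ := exists_lipschitz_eq_of_abs_sub_lt_half hδ hδint hf hg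
  have hfar_mass : ε ≤ ∑ x with δ / 2 ≤ |g x - f x|, vmass p x :=
    (hfar G hG).trans <| sum_le_sum_of_subset_of_nonneg
      (monotone_filter_right _ fun x _ hne => not_lt.1 fun hlt => hne (hGf x hlt).symm)
      fun x _ _ => vmass_nonneg hp x
  have hmarkov := mul_sum_filter_le_sum_mul univ (fun x _ => vmass_nonneg hp x)
    (fun x _ => abs_nonneg (g x - f x)) (δ / 2)
  have hmove : ∑ x, vmass p x * |g x - f x| ≤ (∑ i, violationScore p i f) / 2 := by
    simpa only [Fin.sum_univ_def] using
      sum_vmass_mul_abs_repairAlong_sub_le hp (List.nodup_finRange d) f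
  have hscore : ∑ i, violationScore p i f ≤ ImD f * violatedEdgeMass p f :=
    (sum_le_sum fun i _ => violationScore_le_ImD_mul hp f i).trans_eq (mul_sum ..).symm
  nlinarith [mul_le_mul_of_nonneg_left hfar_mass (by linarith : 0 ≤ δ / 2)]

end Repair

end LipschitzRepair

open LipschitzRepair

theorem violated_edge_mass_lower_bound_general {d : ℕ} (δ ε : ℝ)
    (hδ : 0 < δ ∧ δ ≤ 1) (hδint : ∃ n : ℤ, (n : ℝ) * δ = 1)
    (p : Fin d → ℝ) (hp : ∀ i, 0 ≤ p i ∧ p i ≤ 1)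
    (f : (Fin d → Bool) → ℝ) (hf : ∀ x, ∃ n : ℤ, f x = n * δ)
    (hImD : 0 < ImD f)
    (hfar : ∀ g : (Fin d → Bool) → ℝ,
      (∀ x y : Fin d → Bool, |g x - g y| ≤ (hammingDist x y : ℝ)) →
      ε ≤ ∑ x ∈ Finset.univ.filter (fun x => f x ≠ g x), vmass p x) :
    δ * (ε - (d : ℝ) ^ 2 * δ) / ((d : ℝ) * ImD f) ≤
      ∑ i : Fin d, ∑ x ∈ Finset.univ.filter
          (fun x : Fin d → Bool => x i = false ∧
            1 < |f x - f (Function.update x i true)|),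
        (vmass p x + vmass p (Function.update x i true)) / d := by
  have hkey := mul_le_ImD_mul_violatedEdgeMass hδ.1 hδint hp hf hfar
  simp_rw [← sum_div]
  calc δ * (ε - (d : ℝ) ^ 2 * δ) / ((d : ℝ) * ImD f) ≤ δ * ε / ((d : ℝ) * ImD f) :=
        div_le_div_of_nonneg_right
          (mul_le_mul_of_nonneg_left (sub_le_self _ (mul_nonneg (sq_nonneg _) hδ.1.le)) hδ.1.le)
          (by positivity)
    _ ≤ ImD f * violatedEdgeMass p f / (ImD f * d) := by
        rw [mul_comm (d : ℝ)]
        exact div_le_div_of_nonneg_right hkey (by positivity)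
    _ = violatedEdgeMass p f / d := mul_div_mul_left _ _ hImD.ne'

/-- Main structural lemma: if a `δℤ`-valued `f : {0,1}^d → ℝ` is `ε`-far from
Lipschitz with respect to the product Bernoulli distribution `Π`, then the total
edge mass `Σ_{violated edges {x,y}} (p_x+p_y)/d` is at least
`δ(ε − d²δ)/(d · ImD(f))`. -/
theorem violated_edge_mass_lower_bound {d : ℕ} (hd : 0 < d) (δ ε : ℝ)
    (hδ : 0 < δ ∧ δ ≤ 1) (hδint : ∃ n : ℤ, (n : ℝ) * δ = 1)
    (p : Fin d → ℝ) (hp : ∀ i, 0 ≤ p i ∧ p i ≤ 1)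
    (f : (Fin d → Bool) → ℝ) (hf : ∀ x, ∃ n : ℤ, f x = n * δ)
    (hImD : 0 < ImD f)
    (hfar : ∀ g : (Fin d → Bool) → ℝ,
      (∀ x y : Fin d → Bool, |g x - g y| ≤ (hammingDist x y : ℝ)) →
      ε ≤ ∑ x ∈ Finset.univ.filter (fun x => f x ≠ g x), vmass p x) :
    δ * (ε - (d : ℝ) ^ 2 * δ) / ((d : ℝ) * ImD f) ≤
      ∑ i : Fin d, ∑ x ∈ Finset.univ.filter
          (fun x : Fin d → Bool => x i = false ∧
            1 < |f x - f (Function.update x i true)|),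
        (vmass p x + vmass p (Function.update x i true)) / d :=
  violated_edge_mass_lower_bound_general δ ε hδ hδint p hp f hf hImD hfar
end

section
/- Repair operator accounting (Lemma 2, part 2): for a function f : {0,1}^d → δℤ and dimensions i ≠ j, let f' be obtained from f by repeatedly applying the asymmetric basic operator B_i until no violated edges remain along dimension i, and let A_i[f] = R[f'] where R rounds values to the nearest multiple of δ. Then VS_j(A_i[f]) ≤ VS_j(f) + δ, where VS_j is the total violation score along dimension j. -/
open scoped Classical

/-- One (parallel) application of the asymmetric basic operator `B_i` along
dimension `i`: on each violated dimension-`i` edge `{x,y}` with `f x < f y − 1`,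
if `H(x) > H(y)` then `f x` increases by `(1−p_i)δ` and `f y` decreases by
`p_i δ`; if `H(x) < H(y)` then `f x` increases by `p_i δ` and `f y` decreases by
`(1−p_i)δ`.  (On a dimension-`i` edge, `H(x) > H(y)` iff `x i = true`.) -/
noncomputable def Bstep {d : ℕ} (δ pi : ℝ) (i : Fin d)
    (f : (Fin d → Bool) → ℝ) : (Fin d → Bool) → ℝ := fun x =>
  let y := Function.update x i (!x i)
  if f x < f y - 1 then
    (if x i then f x + (1 - pi) * δ else f x + pi * δ)
  else if f y < f x - 1 then
    (if x i then f x - (1 - pi) * δ else f x - pi * δ)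
  else f x

/-- Rounding a real to the nearest multiple of `δ`. -/
noncomputable def rnd (δ v : ℝ) : ℝ := δ * ⌊v / δ + 1 / 2⌋

/-- Violation score along dimension `j`. -/
noncomputable def VS {d : ℕ} (p : Fin d → ℝ) (j : Fin d)
    (f : (Fin d → Bool) → ℝ) : ℝ :=
  ∑ x ∈ Finset.univ.filter (fun x : Fin d → Bool => x j = false),
    max 0 ((vmass p x + vmass p (Function.update x j true)) *
      (|f x - f (Function.update x j true)| - 1))

/-!
Write `VS_j g = ∑ m(e) φ(Δ_e g)` over the dimension-`j` edges `e`, with `φ t = max 0 (|t| - 1)`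
convex. These edges pair up into squares `{x, xʲ}`, `{xⁱ, xⁱʲ}`, and the product measure gives the
two masses in ratio `(1 - p_i) : p_i`. One step of `B_i` shifts the two differences by `p_i t` and
`-(1 - p_i) t`, where `t` is a multiple of `δ` lying between `0` and the gap between them (all
dimension-`i` differences stay in `δℤ`, so a violated edge has a gap of at least `1 + δ`): the two
differences move towards each other while keeping their weighted mean, and by convexity the score
does not increase. Rounding moves each difference by at most `δ`, `φ` is `1`-Lipschitz, and the
dimension-`j` edge masses sum to `1`.
-/

open Set Function

noncomputable def violation (t : ℝ) : ℝ := max 0 (|t| - 1)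

lemma convexOn_violation : ConvexOn ℝ univ violation := by
  have habs : ConvexOn ℝ univ (fun t : ℝ => |t| - 1) :=
    (convexOn_univ_norm.add_const (-1)).congr fun t _ => by simp [sub_eq_add_neg]
  exact (convexOn_const 0 convex_univ).sup habs

lemma violation_le_add_abs_sub (s t : ℝ) : violation s ≤ violation t + |s - t| := by
  have habs := abs_sub_abs_le_abs_sub s t
  unfold violation
  apply max_le <;> linarith [le_max_left 0 (|t| - 1), le_max_right 0 (|t| - 1), abs_nonneg (s - t)]

/-- Moving the two atoms of a distribution with weights `1 - q`, `q` towards each other while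
keeping its mean fixed does not increase the mean of a convex function. -/
lemma ConvexOn.transfer_le_of_le {φ : ℝ → ℝ} (hφ : ConvexOn ℝ univ φ) {q t u v : ℝ}
    (hq : q ∈ Icc (0 : ℝ) 1) (ht : 0 ≤ t) (htuv : t ≤ v - u) :
    (1 - q) * φ (u + q * t) + q * φ (v - (1 - q) * t) ≤ (1 - q) * φ u + q * φ v := by
  obtain ⟨hq0, hq1⟩ := hq
  rcases ht.eq_or_lt with rfl | ht
  · simp
  set s := t / (v - u)
  have hs0 : 0 ≤ s := div_nonneg ht.le (by linarith)
  have hs1 : s ≤ 1 := (div_le_one (by linarith)).2 htuv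
  have hts : t = s * (v - u) := (div_mul_cancel₀ t (by linarith)).symm
  have hlow : φ ((1 - q * s) • u + (q * s) • v) ≤ (1 - q * s) • φ u + (q * s) • φ v :=
    hφ.2 (mem_univ u) (mem_univ v) (by nlinarith) (by positivity) (by ring)
  have hhigh : φ (((1 - q) * s) • u + (1 - (1 - q) * s) • v) ≤
      ((1 - q) * s) • φ u + (1 - (1 - q) * s) • φ v :=
    hφ.2 (mem_univ u) (mem_univ v) (by nlinarith) (by nlinarith) (by ring)
  simp only [smul_eq_mul] at hlow hhigh
  rw [show (1 - q * s) * u + q * s * v = u + q * t by rw [hts]; ring] at hlow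
  rw [show (1 - q) * s * u + (1 - (1 - q) * s) * v = v - (1 - q) * t by rw [hts]; ring] at hhigh
  have h1q : 0 ≤ 1 - q := by linarith
  linear_combination (1 - q) * hlow + q * hhigh

lemma ConvexOn.transfer_le {φ : ℝ → ℝ} (hφ : ConvexOn ℝ univ φ) {q t u v : ℝ}
    (hq : q ∈ Icc (0 : ℝ) 1) (ht : t ∈ uIcc 0 (v - u)) :
    (1 - q) * φ (u + q * t) + q * φ (v - (1 - q) * t) ≤ (1 - q) * φ u + q * φ v := by
  rcases mem_uIcc.1 ht with ⟨ht0, htuv⟩ | ⟨htuv, ht0⟩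
  · exact hφ.transfer_le_of_le hq ht0 htuv
  · have hq' : 1 - q ∈ Icc (0 : ℝ) 1 := ⟨by linarith [hq.2], by linarith [hq.1]⟩
    have := hφ.transfer_le_of_le hq' (neg_nonneg.2 ht0) (by linarith : -t ≤ u - v)
    rw [sub_sub_cancel, show v + (1 - q) * -t = v - (1 - q) * t by ring,
      show u - q * -t = u + q * t by ring] at this
    linarith

/-- `a, b` and `c, e` are the ends of two parallel dimension-`i` edges, and `W₀`, `W₁` are the
masses of the dimension-`j` edges `{a, c}` and `{b, e}`. -/
lemma transfer_square_le {q δ s₁ s₂ W₀ W₁ a b c e : ℝ} (hq : q ∈ Icc (0 : ℝ) 1)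
    (hW₀ : 0 ≤ W₀) (hW₁ : 0 ≤ W₁) (hW : q * W₀ = (1 - q) * W₁)
    (hs : (s₁ - s₂) * δ ∈ uIcc 0 ((b - a) - (e - c))) :
    W₀ * violation ((a + s₁ * (q * δ)) - (c + s₂ * (q * δ))) +
        W₁ * violation ((b - s₁ * ((1 - q) * δ)) - (e - s₂ * ((1 - q) * δ))) ≤
      W₀ * violation (a - c) + W₁ * violation (b - e) := by
  rw [show a + s₁ * (q * δ) - (c + s₂ * (q * δ)) = a - c + q * ((s₁ - s₂) * δ) by ring,
    show b - s₁ * ((1 - q) * δ) - (e - s₂ * ((1 - q) * δ)) =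
      b - e - (1 - q) * ((s₁ - s₂) * δ) by ring]
  have key := mul_le_mul_of_nonneg_left
    (convexOn_violation.transfer_le hq (u := a - c) (v := b - e) (by convert hs using 2; ring))
    (add_nonneg hW₀ hW₁)
  linear_combination key +
    (violation (a - c + q * ((s₁ - s₂) * δ)) - violation (a - c)) * hW -
    (violation (b - e - (1 - q) * ((s₁ - s₂) * δ)) - violation (b - e)) * hW

lemma add_le_of_lt_of_sub_mem_zmultiples {δ a b : ℝ} (hδ : 0 < δ)
    (hab : b - a ∈ AddSubgroup.zmultiples δ) (hlt : a < b) : a + δ ≤ b := by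
  obtain ⟨k, hk⟩ := AddSubgroup.mem_zmultiples_iff.1 hab
  rw [zsmul_eq_mul] at hk
  have hk0 : (0 : ℝ) < k := pos_of_mul_pos_left (by linarith) hδ.le
  have hk1 : (1 : ℝ) ≤ k := by exact_mod_cast (show (1 : ℤ) ≤ k by exact_mod_cast hk0)
  nlinarith

/-- The direction in which `B_i` moves the lower end of a dimension-`i` edge; `e` is the value at
the upper end minus the value at the lower end. -/
noncomputable def violationSign (e : ℝ) : ℤ := if 1 < e then 1 else if e < -1 then -1 else 0

lemma violationSign_cases {δ e : ℝ} (hδ : 0 < δ) (hone : 1 ∈ AddSubgroup.zmultiples δ)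
    (he : e ∈ AddSubgroup.zmultiples δ) :
    (violationSign e = 1 ∧ 1 + δ ≤ e) ∨ (violationSign e = 0 ∧ -1 ≤ e ∧ e ≤ 1) ∨
      (violationSign e = -1 ∧ e + δ ≤ -1) := by
  unfold violationSign
  split_ifs with h1 h2
  · exact Or.inl ⟨rfl, add_le_of_lt_of_sub_mem_zmultiples hδ (sub_mem he hone) h1⟩
  · refine Or.inr (Or.inr ⟨rfl, add_le_of_lt_of_sub_mem_zmultiples hδ ?_ h2⟩)
    simpa [sub_eq_add_neg, add_comm] using neg_mem (add_mem he hone)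
  · exact Or.inr (Or.inl ⟨rfl, by linarith, by linarith⟩)

lemma violationSign_sub_mul_mem_uIcc {δ e₁ e₂ : ℝ} (hδ : 0 < δ)
    (hone : 1 ∈ AddSubgroup.zmultiples δ) (h₁ : e₁ ∈ AddSubgroup.zmultiples δ)
    (h₂ : e₂ ∈ AddSubgroup.zmultiples δ) :
    ((violationSign e₁ : ℝ) - violationSign e₂) * δ ∈ uIcc 0 (e₁ - e₂) := by
  rcases violationSign_cases hδ hone h₁ with ⟨hs₁, he₁⟩ | ⟨hs₁, he₁, he₁'⟩ | ⟨hs₁, he₁⟩ <;>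
  rcases violationSign_cases hδ hone h₂ with ⟨hs₂, he₂⟩ | ⟨hs₂, he₂, he₂'⟩ | ⟨hs₂, he₂⟩ <;>
  simp only [hs₁, hs₂, mem_uIcc] <;> push_cast <;>
  first
  | (left; constructor <;> linarith)
  | (right; constructor <;> linarith)
  | simp [le_total]

lemma Finset.sum_eq_sum_update_pairs {ι M : Type*} [DecidableEq ι] [AddCommMonoid M]
    {s : Finset (ι → Bool)} (l : ι) (hs : ∀ x b, update x l b ∈ s ↔ x ∈ s) (F : (ι → Bool) → M) :
    ∑ x ∈ s, F x = ∑ x ∈ s with x l = false, (F x + F (update x l true)) := by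
  rw [Finset.sum_add_distrib, ← Finset.sum_filter_add_sum_filter_not s (fun x => x l = false)]
  congr 1
  refine (Finset.sum_nbij' (fun x : ι → Bool => update x l true)
    (fun x : ι → Bool => update x l false) ?_ ?_ ?_ ?_
    fun _ _ => rfl).symm
  all_goals intro x hx
  all_goals simp only [Finset.mem_filter, Bool.not_eq_false] at hx ⊢
  · exact ⟨(hs x true).2 hx.1, update_self l true x⟩
  · exact ⟨(hs x false).2 hx.1, update_self l false x⟩
  · rw [update_idem, ← hx.2, update_eq_self]
  · rw [update_idem, ← hx.2, update_eq_self]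

section vmass

variable {d : ℕ} {p : Fin d → ℝ}

lemma vmass_nonneg (hp : ∀ l, p l ∈ Icc (0 : ℝ) 1) (x : Fin d → Bool) : 0 ≤ vmass p x :=
  Finset.prod_nonneg fun l _ => by
    split_ifs
    · exact (hp l).1
    · linarith [(hp l).2]

lemma sum_vmass : ∑ x, vmass p x = 1 := by
  unfold vmass
  rw [← Fintype.prod_sum fun l (b : Bool) => if b then p l else 1 - p l]
  simp

lemma vmass_update (x : Fin d → Bool) (i : Fin d) (b : Bool) :
    vmass p (update x i b) =
      (if b then p i else 1 - p i) * ∏ l ∈ Finset.univ \ {i}, if x l then p l else 1 - p l := by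
  rw [vmass, ← Finset.prod_update_of_mem (Finset.mem_univ i)]
  refine Finset.prod_congr rfl fun l _ => ?_
  rcases eq_or_ne l i with rfl | hl <;> simp [*]

lemma mul_vmass_of_apply_eq_false {x : Fin d → Bool} {i : Fin d} (hx : x i = false) :
    p i * vmass p x = (1 - p i) * vmass p (update x i true) := by
  conv_lhs => rw [← update_eq_self i x, hx]
  rw [vmass_update, vmass_update]
  simp only [Bool.false_eq_true, if_false, if_true]
  ring

end vmass

lemma abs_rnd_sub_le {δ : ℝ} (hδ : 0 < δ) (v : ℝ) : |rnd δ v - v| ≤ δ / 2 := by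
  have hround : rnd δ v - v = -(δ * (v / δ - round (v / δ))) := by
    rw [rnd, ← round_eq]
    field_simp
    ring
  rw [hround, abs_neg, abs_mul, abs_of_pos hδ]
  nlinarith [abs_sub_round (v / δ)]

section VS

variable {d : ℕ} {p : Fin d → ℝ}

lemma VS_eq_sum_violation (hp : ∀ l, p l ∈ Icc (0 : ℝ) 1) (j : Fin d)
    (g : (Fin d → Bool) → ℝ) :
    VS p j g = ∑ x ∈ Finset.univ with x j = false,
      (vmass p x + vmass p (update x j true)) * violation (g x - g (update x j true)) := by
  refine Finset.sum_congr rfl fun x _ => ?_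
  rw [violation, mul_max_of_nonneg _ _ (add_nonneg (vmass_nonneg hp _) (vmass_nonneg hp _)),
    mul_zero]

lemma sum_edge_vmass (j : Fin d) :
    ∑ x ∈ Finset.univ with x j = false, (vmass p x + vmass p (update x j true)) = 1 := by
  rw [← Finset.sum_eq_sum_update_pairs j (by simp), sum_vmass]

lemma VS_le_add_of_abs_sub_le (hp : ∀ l, p l ∈ Icc (0 : ℝ) 1) (j : Fin d)
    {g h : (Fin d → Bool) → ℝ} {ε : ℝ} (hgh : ∀ x, |h x - g x| ≤ ε) :
    VS p j h ≤ VS p j g + 2 * ε := by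
  rw [VS_eq_sum_violation hp, VS_eq_sum_violation hp, ← mul_one (2 * ε), ← sum_edge_vmass j,
    Finset.mul_sum, ← Finset.sum_add_distrib]
  refine Finset.sum_le_sum fun x _ => ?_
  set y := update x j true
  have hW : 0 ≤ vmass p x + vmass p y := add_nonneg (vmass_nonneg hp _) (vmass_nonneg hp _)
  have hdiff : |(h x - h y) - (g x - g y)| ≤ 2 * ε := by
    calc |(h x - h y) - (g x - g y)| = |(h x - g x) - (h y - g y)| := by ring_nf
      _ ≤ |h x - g x| + |h y - g y| := abs_sub _ _
      _ ≤ 2 * ε := by linarith [hgh x, hgh y]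
  calc (vmass p x + vmass p y) * violation (h x - h y)
      ≤ (vmass p x + vmass p y) * (violation (g x - g y) + 2 * ε) :=
        mul_le_mul_of_nonneg_left ((violation_le_add_abs_sub _ _).trans (by linarith)) hW
    _ = _ := by ring

end VS

section Bstep

variable {d : ℕ} {δ q : ℝ} {i : Fin d} {g : (Fin d → Bool) → ℝ}

/-- `B_i` moves values off `δℤ`, but keeps this invariant. -/
def EdgeDiffsMemZMultiples (δ : ℝ) (i : Fin d) (g : (Fin d → Bool) → ℝ) : Prop :=
  ∀ x : Fin d → Bool, x i = false → g (update x i true) - g x ∈ AddSubgroup.zmultiples δ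

lemma Bstep_of_apply_eq_false {x : Fin d → Bool} (hx : x i = false) :
    Bstep δ q i g x = g x + violationSign (g (update x i true) - g x) * (q * δ) := by
  unfold Bstep violationSign
  simp only [hx, Bool.not_false, Bool.false_eq_true, if_false]
  split_ifs <;> push_cast <;> linarith

lemma Bstep_update_of_apply_eq_false {x : Fin d → Bool} (hx : x i = false) :
    Bstep δ q i g (update x i true) =
      g (update x i true) - violationSign (g (update x i true) - g x) * ((1 - q) * δ) := by
  have hy : update (update x i true) i false = x := by rw [update_idem, ← hx, update_eq_self]
  unfold Bstep violationSign
  simp only [update_self, Bool.not_true, hy, if_true]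
  split_ifs <;> push_cast <;> linarith

lemma EdgeDiffsMemZMultiples.Bstep (hg : EdgeDiffsMemZMultiples δ i g) :
    EdgeDiffsMemZMultiples δ i (Bstep δ q i g) := by
  intro x hx
  rw [Bstep_of_apply_eq_false hx, Bstep_update_of_apply_eq_false hx,
    show ∀ a b σ : ℝ, b - σ * ((1 - q) * δ) - (a + σ * (q * δ)) = b - a - σ * δ by
      intros; ring]
  exact sub_mem (hg x hx) ⟨_, zsmul_eq_mul _ _⟩

variable {p : Fin d → ℝ} {j : Fin d}

lemma VS_Bstep_le (hij : i ≠ j) (hδ : 0 < δ) (hone : 1 ∈ AddSubgroup.zmultiples δ)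
    (hp : ∀ l, p l ∈ Icc (0 : ℝ) 1) (hg : EdgeDiffsMemZMultiples δ i g) :
    VS p j (Bstep δ (p i) i g) ≤ VS p j g := by
  have hs : ∀ (x : Fin d → Bool) b,
      update x i b ∈ Finset.univ.filter (· j = false) ↔ x ∈ Finset.univ.filter (· j = false) := by
    simp [update_of_ne hij.symm]
  rw [VS_eq_sum_violation hp, VS_eq_sum_violation hp, Finset.sum_eq_sum_update_pairs i hs,
    Finset.sum_eq_sum_update_pairs i hs]
  refine Finset.sum_le_sum fun x hx => ?_
  simp only [Finset.mem_filter, Finset.mem_univ, true_and] at hx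
  obtain ⟨hxj, hxi⟩ := hx
  have hyi : update x j true i = false := by rw [update_of_ne hij, hxi]
  have hcomm : update (update x i true) j true = update (update x j true) i true :=
    update_comm hij _ _ _
  have hW : p i * (vmass p x + vmass p (update x j true)) =
      (1 - p i) * (vmass p (update x i true) + vmass p (update (update x j true) i true)) := by
    rw [mul_add, mul_add, mul_vmass_of_apply_eq_false hxi, mul_vmass_of_apply_eq_false hyi]
  rw [hcomm, Bstep_of_apply_eq_false hxi, Bstep_of_apply_eq_false hyi,
    Bstep_update_of_apply_eq_false hxi, Bstep_update_of_apply_eq_false hyi]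
  exact transfer_square_le (hp i) (add_nonneg (vmass_nonneg hp _) (vmass_nonneg hp _))
    (add_nonneg (vmass_nonneg hp _) (vmass_nonneg hp _)) hW
    (violationSign_sub_mul_mem_uIcc hδ hone (hg x hxi) (hg _ hyi))

lemma VS_iterate_Bstep_le (hij : i ≠ j) (hδ : 0 < δ) (hone : 1 ∈ AddSubgroup.zmultiples δ)
    (hp : ∀ l, p l ∈ Icc (0 : ℝ) 1) (k : ℕ) (hg : EdgeDiffsMemZMultiples δ i g) :
    VS p j ((Bstep δ (p i) i)^[k] g) ≤ VS p j g := by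
  induction k generalizing g with
  | zero => rfl
  | succ k ih =>
    rw [iterate_succ_apply]
    exact (ih hg.Bstep).trans (VS_Bstep_le hij hδ hone hp hg)

end Bstep

theorem repair_operator_accounting_general {d k : ℕ} (i j : Fin d) (hij : i ≠ j)
    (δ : ℝ) (hδ : 0 < δ ∧ δ ≤ 1) (hδint : ∃ n : ℤ, (n : ℝ) * δ = 1)
    (p : Fin d → ℝ) (hp : ∀ l, 0 < p l ∧ p l < 1)
    (f : (Fin d → Bool) → ℝ) (hf : ∀ x, ∃ n : ℤ, f x = n * δ) :
    VS p j (fun x => rnd δ ((Bstep δ (p i) i)^[k] f x)) ≤ VS p j f + δ := by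
  have hp' : ∀ l, p l ∈ Icc (0 : ℝ) 1 := fun l => ⟨(hp l).1.le, (hp l).2.le⟩
  have hmem : ∀ x, f x ∈ AddSubgroup.zmultiples δ := fun x => by
    obtain ⟨n, hn⟩ := hf x
    exact ⟨n, by simp [hn]⟩
  have hone : (1 : ℝ) ∈ AddSubgroup.zmultiples δ := by
    obtain ⟨n, hn⟩ := hδint
    exact ⟨n, by simp [hn]⟩
  calc VS p j (fun x => rnd δ ((Bstep δ (p i) i)^[k] f x))
      ≤ VS p j ((Bstep δ (p i) i)^[k] f) + 2 * (δ / 2) :=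
        VS_le_add_of_abs_sub_le hp' j fun x => abs_rnd_sub_le hδ.1 _
    _ ≤ VS p j f + δ := by
        linarith [VS_iterate_Bstep_le hij hδ.1 hone hp' k fun x _ => sub_mem (hmem _) (hmem x)]

/-- Repair operator accounting (Lemma 2, part 2): if `f'` is obtained from a
`δℤ`-valued `f` by repeatedly applying the asymmetric basic operator `B_i` until
no violated dimension-`i` edges remain, and `A_i[f]` rounds `f'` to the nearest
multiples of `δ`, then `VS_j(A_i[f]) ≤ VS_j(f) + δ` for every `j ≠ i`. -/
theorem repair_operator_accounting {d k : ℕ} (i j : Fin d) (hij : i ≠ j)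
    (δ : ℝ) (hδ : 0 < δ ∧ δ ≤ 1) (hδint : ∃ n : ℤ, (n : ℝ) * δ = 1)
    (p : Fin d → ℝ) (hp : ∀ l, 0 < p l ∧ p l < 1)
    (f : (Fin d → Bool) → ℝ) (hf : ∀ x, ∃ n : ℤ, f x = n * δ)
    (hk : ∀ x : Fin d → Bool,
      |(Bstep δ (p i) i)^[k] f x -
        (Bstep δ (p i) i)^[k] f (Function.update x i (!x i))| ≤ 1) :
    VS p j (fun x => rnd δ ((Bstep δ (p i) i)^[k] f x)) ≤ VS p j f + δ :=
  repair_operator_accounting_general i j hij δ hδ hδint p hp f hf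
end

section
/- Square-preservation of violation score: consider a 2-dimensional square with vertices x_b, x_t, y_b, y_t in {0,1}^d where y_t = x_t + e_i = y_b + e_j, x_t = x_b + e_j, y_b = x_b + e_i (so H(y_t) = H(x_t)+1 = H(y_b)+1 = H(x_b)+2). Suppose one application of the asymmetric basic operator B_i along dimension i (modifying the i-edges {x_b,y_b} and {x_t,y_t} if violated, per the asymmetric update rule) increases the violation score of the j-edge {x_b,x_t}. Then the violation score of the j-edge {y_b,y_t} decreases by at least as much, so vs({x_b,x_t}) + vs({y_b,y_t}) does not increase. -/
/-!
Write `k = s(y_b - x_b) - s(y_t - x_t)`, where `s(e) ∈ {-1, 0, 1}` is the direction in which `B_i`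
moves an `i`-edge with values differing by `e`. Then `B_i` shifts `x_b - x_t` by `k p_i δ` and
`y_b - y_t` by `-k (1 - p_i) δ`, and the mass relation makes these two shifts carry the same
weighted amount `(p_{x_b} + p_{x_t}) k p_i δ = (p_{y_b} + p_{y_t}) k (1 - p_i) δ`.

If the score of `{x_b, x_t}` increases, then `k ≠ 0`; by the symmetry `f ↦ -f` we may take `k > 0`,
and then `x_b' - x_t' > 1`. The key point is that `e ↦ e - s(e) δ` is monotone on `δℤ` (a violated
edge has `|e| ≥ 1 + δ` there), and `(y_b' - y_t') - (x_b' - x_t')` is exactly the increment of this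
map from `y_t - x_t` to `y_b - x_b`. Hence `y_b' - y_t' ≥ x_b' - x_t' > 1`: both `j`-edges are
violated after the update, so the score of `{y_b, y_t}` drops by the full weighted amount while that
of `{x_b, x_t}` rises by at most that amount.
-/

open AddSubgroup

noncomputable def violationScore (p d : ℝ) : ℝ := max 0 (p * (|d| - 1))

/-- The direction in which `B_i` moves an `i`-edge whose upper endpoint exceeds the lower one by
`e`: the lower endpoint moves by `pushSign e * p_i δ`, the upper one by `-pushSign e * (1 - p_i) δ`. -/
noncomputable def pushSign (e : ℝ) : ℝ := if 1 < e then 1 else if e < -1 then -1 else 0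

section ViolationScore

variable {p q a b d d' t t' : ℝ}

@[simp]
lemma violationScore_neg (p d : ℝ) : violationScore p (-d) = violationScore p d := by
  simp [violationScore]

lemma mul_sub_one_le_violationScore (hp : 0 ≤ p) (d : ℝ) : p * (d - 1) ≤ violationScore p d :=
  le_max_of_le_right (by gcongr; exact le_abs_self d)

lemma violationScore_of_one_le (hp : 0 ≤ p) (hd : 1 ≤ d) : violationScore p d = p * (d - 1) := by
  rw [violationScore, abs_of_nonneg (by linarith), max_eq_right (mul_nonneg hp (by linarith))]

lemma violationScore_le_of_abs_le (hp : 0 ≤ p) (h : |d| ≤ |d'|) :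
    violationScore p d ≤ violationScore p d' := by
  unfold violationScore
  gcongr

lemma one_lt_abs_of_violationScore_pos (hp : 0 ≤ p) (h : 0 < violationScore p d) : 1 < |d| := by
  by_contra! hd
  have : p * (|d| - 1) ≤ 0 := mul_nonpos_of_nonneg_of_nonpos hp (by linarith)
  rw [violationScore, max_eq_left this] at h
  exact h.false

lemma one_lt_add_of_violationScore_lt (hp : 0 ≤ p) (ht : 0 ≤ t)
    (h : violationScore p a < violationScore p (a + t)) : 1 < a + t := by
  have habs : 1 < |a + t| := one_lt_abs_of_violationScore_pos hp ((le_max_left _ _).trans_lt h)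
  by_contra! hle
  have hneg : a + t < 0 := by
    rcases abs_cases (a + t) with ⟨_, _⟩ | ⟨_, _⟩ <;> linarith
  have : |a + t| ≤ |a| := by
    rw [abs_of_neg hneg]
    linarith [neg_abs_le a]
  exact h.not_ge (violationScore_le_of_abs_le hp this)

lemma violationScore_add_add_violationScore_sub_le (hp : 0 ≤ p) (hq : 0 ≤ q)
    (hqp : q * t' = p * t) (ha : 1 ≤ a + t) (hb : 1 ≤ b - t') :
    violationScore p (a + t) + violationScore q (b - t') ≤
      violationScore p a + violationScore q b := by
  rw [violationScore_of_one_le hp ha, violationScore_of_one_le hq hb]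
  linarith [mul_sub_one_le_violationScore hp a, mul_sub_one_le_violationScore hq b]

end ViolationScore

section PushSign

variable {δ e : ℝ}

@[simp]
lemma pushSign_neg (e : ℝ) : pushSign (-e) = -pushSign e := by
  unfold pushSign
  split_ifs <;> linarith

lemma pushSign_monotone : Monotone pushSign := by
  intro e e' h
  unfold pushSign
  split_ifs <;> linarith

lemma le_of_mem_zmultiples_of_pos {x : ℝ} (hδ : 0 ≤ δ) (hx : x ∈ zmultiples δ) (hx0 : 0 < x) :
    δ ≤ x := by
  obtain ⟨n, rfl⟩ := mem_zmultiples_iff.1 hx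
  rw [zsmul_eq_mul] at hx0 ⊢
  have hn : 0 < n := by exact_mod_cast pos_of_mul_pos_left hx0 hδ
  simpa using mul_le_mul_of_nonneg_right (show (1 : ℝ) ≤ n by exact_mod_cast hn) hδ

lemma one_add_le_of_one_lt (hδ : 0 ≤ δ) (h1 : (1 : ℝ) ∈ zmultiples δ) (he : e ∈ zmultiples δ)
    (h : 1 < e) : 1 + δ ≤ e := by
  linarith [le_of_mem_zmultiples_of_pos hδ (sub_mem he h1) (sub_pos.2 h)]

lemma le_neg_one_sub_of_lt_neg_one (hδ : 0 ≤ δ) (h1 : (1 : ℝ) ∈ zmultiples δ)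
    (he : e ∈ zmultiples δ) (h : e < -1) : e ≤ -1 - δ := by
  linarith [one_add_le_of_one_lt hδ h1 (neg_mem he) (by linarith)]

lemma monotoneOn_sub_pushSign_mul (hδ : 0 ≤ δ) (h1 : (1 : ℝ) ∈ zmultiples δ) :
    MonotoneOn (fun e => e - pushSign e * δ) (zmultiples δ) := by
  intro e he e' he' h
  have hlow := le_neg_one_sub_of_lt_neg_one hδ h1 he
  have hup := one_add_le_of_one_lt hδ h1 he'
  dsimp only
  unfold pushSign
  split_ifs <;> grind

lemma ite_update_eq_add_pushSign_mul (u v c : ℝ) :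
    (if u < v - 1 then u + c else if v < u - 1 then u - c else u) = u + pushSign (v - u) * c := by
  unfold pushSign
  split_ifs <;> linarith

lemma ite_update_eq_sub_pushSign_mul (u v c : ℝ) :
    (if u < v - 1 then v - c else if v < u - 1 then v + c else v) = v - pushSign (v - u) * c := by
  unfold pushSign
  split_ifs <;> linarith

end PushSign

section Square

-- On the square, `a = x_b - x_t`, `b = y_b - y_t`, `e = y_b - x_b` and `e' = y_t - x_t`.
variable {δ ρ p q a b e e' : ℝ}

lemma violationScore_square_le_of_pos (hδ : 0 ≤ δ) (h1 : (1 : ℝ) ∈ zmultiples δ) (hρ : 0 ≤ ρ)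
    (hp : 0 ≤ p) (hq : 0 ≤ q) (hqp : q * (1 - ρ) = p * ρ)
    (he : e ∈ zmultiples δ) (he' : e' ∈ zmultiples δ) (hba : b - a = e - e')
    (hk : 0 < pushSign e - pushSign e')
    (hinc : violationScore p a < violationScore p (a + (pushSign e - pushSign e') * (ρ * δ))) :
    violationScore p (a + (pushSign e - pushSign e') * (ρ * δ)) +
        violationScore q (b - (pushSign e - pushSign e') * ((1 - ρ) * δ)) ≤
      violationScore p a + violationScore q b := by
  set k := pushSign e - pushSign e'
  have ha : 1 < a + k * (ρ * δ) :=
    one_lt_add_of_violationScore_lt hp (by positivity) hinc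
  have hgap : e' - pushSign e' * δ ≤ e - pushSign e * δ :=
    monotoneOn_sub_pushSign_mul hδ h1 he' he (pushSign_monotone.reflect_lt (sub_pos.1 hk)).le
  refine violationScore_add_add_violationScore_sub_le hp hq ?_ ha.le ?_
  · linear_combination k * δ * hqp
  · linarith

lemma violationScore_square_le (hδ : 0 ≤ δ) (h1 : (1 : ℝ) ∈ zmultiples δ) (hρ : 0 ≤ ρ)
    (hp : 0 ≤ p) (hq : 0 ≤ q) (hqp : q * (1 - ρ) = p * ρ)
    (he : e ∈ zmultiples δ) (he' : e' ∈ zmultiples δ) (hba : b - a = e - e')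
    (hinc : violationScore p a < violationScore p (a + (pushSign e - pushSign e') * (ρ * δ))) :
    violationScore p (a + (pushSign e - pushSign e') * (ρ * δ)) +
        violationScore q (b - (pushSign e - pushSign e') * ((1 - ρ) * δ)) ≤
      violationScore p a + violationScore q b := by
  rcases lt_trichotomy (pushSign e - pushSign e') 0 with hk | hk | hk
  · have hx (x : ℝ) : -x + (pushSign (-e) - pushSign (-e')) * (ρ * δ) =
        -(x + (pushSign e - pushSign e') * (ρ * δ)) := by simp only [pushSign_neg]; ring
    have hy (y : ℝ) : -y - (pushSign (-e) - pushSign (-e')) * ((1 - ρ) * δ) =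
        -(y - (pushSign e - pushSign e') * ((1 - ρ) * δ)) := by simp only [pushSign_neg]; ring
    have := violationScore_square_le_of_pos (a := -a) (b := -b) hδ h1 hρ hp hq hqp
      (neg_mem he) (neg_mem he') (by linarith) (by simp only [pushSign_neg]; linarith)
      (by simpa only [hx, violationScore_neg] using hinc)
    simpa only [hx, hy, violationScore_neg] using this
  · simp [hk] at hinc
  · exact violationScore_square_le_of_pos hδ h1 hρ hp hq hqp he he' hba hk hinc

end Square

/-- Square-preservation of the violation score: on a 2-dimensional square of the
hypercube with function values `xb, xt, yb, yt` (at `x_b, x_t = x_b+e_j,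
y_b = x_b+e_i, y_t = x_b+e_i+e_j`, all values in `δℤ`) and vertex masses
`pxb, pxt, pyb = pxb·p_i/(1−p_i), pyt = pxt·p_i/(1−p_i)`, if one application of
the asymmetric basic operator `B_i` along dimension `i` (modifying the `i`-edges
`{x_b,y_b}` and `{x_t,y_t}` if violated) increases the violation score of the
`j`-edge `{x_b,x_t}`, then the violation score of `{y_b,y_t}` decreases by at
least as much: the sum of the two `j`-edge violation scores does not increase. -/
theorem square_violation_score_preserved
    (δ pi pxb pxt pyb pyt xb xt yb yt xb' xt' yb' yt' : ℝ)
    (hδ : 0 < δ ∧ δ ≤ 1) (hδint : ∃ n : ℤ, (n : ℝ) * δ = 1)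
    (hpi : 0 < pi ∧ pi < 1) (hpxb : 0 < pxb) (hpxt : 0 < pxt)
    (hpyb : pyb = pxb * pi / (1 - pi)) (hpyt : pyt = pxt * pi / (1 - pi))
    (hxb : ∃ n : ℤ, xb = n * δ) (hxt : ∃ n : ℤ, xt = n * δ)
    (hyb : ∃ n : ℤ, yb = n * δ) (hyt : ∃ n : ℤ, yt = n * δ)
    (hxb' : xb' = if xb < yb - 1 then xb + pi * δ
      else if yb < xb - 1 then xb - pi * δ else xb)
    (hyb' : yb' = if xb < yb - 1 then yb - (1 - pi) * δ
      else if yb < xb - 1 then yb + (1 - pi) * δ else yb)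
    (hxt' : xt' = if xt < yt - 1 then xt + pi * δ
      else if yt < xt - 1 then xt - pi * δ else xt)
    (hyt' : yt' = if xt < yt - 1 then yt - (1 - pi) * δ
      else if yt < xt - 1 then yt + (1 - pi) * δ else yt)
    (hinc : max 0 ((pxb + pxt) * (|xb - xt| - 1))
      < max 0 ((pxb + pxt) * (|xb' - xt'| - 1))) :
    max 0 ((pxb + pxt) * (|xb' - xt'| - 1)) + max 0 ((pyb + pyt) * (|yb' - yt'| - 1))
      ≤ max 0 ((pxb + pxt) * (|xb - xt| - 1)) + max 0 ((pyb + pyt) * (|yb - yt| - 1)) := by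
  obtain ⟨hδ0, -⟩ := hδ
  obtain ⟨hpi0, hpi1⟩ := hpi
  have hlat (x : ℝ) : (∃ n : ℤ, x = n * δ) → x ∈ zmultiples δ :=
    fun ⟨n, hn⟩ => mem_zmultiples_iff.2 ⟨n, by rw [hn, zsmul_eq_mul]⟩
  have h1 : (1 : ℝ) ∈ zmultiples δ := hlat 1 (hδint.imp fun _ hn => hn.symm)
  have hqp : (pyb + pyt) * (1 - pi) = (pxb + pxt) * pi := by
    rw [hpyb, hpyt]
    field_simp [(sub_pos.2 hpi1).ne']
  rw [ite_update_eq_add_pushSign_mul] at hxb' hxt'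
  rw [ite_update_eq_sub_pushSign_mul] at hyb' hyt'
  have ha' : xb' - xt' = xb - xt + (pushSign (yb - xb) - pushSign (yt - xt)) * (pi * δ) := by
    rw [hxb', hxt']; ring
  have hb' : yb' - yt' = yb - yt - (pushSign (yb - xb) - pushSign (yt - xt)) * ((1 - pi) * δ) := by
    rw [hyb', hyt']; ring
  rw [ha'] at hinc ⊢
  rw [hb']
  have hq : 0 ≤ pyb + pyt := by
    rw [hpyb, hpyt]
    have := sub_pos.2 hpi1
    positivity
  exact violationScore_square_le hδ0.le h1 hpi0.le (by positivity) hq hqp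
    (sub_mem (hlat _ hyb) (hlat _ hxb)) (sub_mem (hlat _ hyt) (hlat _ hxt)) (by ring) hinc
end
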